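/- arXiv:2208.03701 — 4 statements merged into one kernel-verified Lean document; each statement's English description precedes it below -/
import Mathlib

section
/- Let φ ∈ AC (i.e., t ↦ φ(t,i) absolutely continuous for each i ∈ S) satisfy: (i) φ(T,i) = g(T,i); (ii) φ(t,i) ≤ g(t,i) for all t; (iii) at a.e. t with φ(t,i) < g(t,i), dφ(t,i)/dt ≤ -H_i(t,φ(t)); (iv) at a.e. t, dφ(t,i)/dt ≥ -H_i(t,φ(t)). If ψ is another function in AC satisfying (i)-(iv), then φ = ψ. -/
/-!
The Hamiltonian is `L`-Lipschitz in `w`, uniformly for `t ∈ [0, T]`: the payoff is affine in `w`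
with coefficients bounded on the compact set `[0, T] × U × V`, and an inf-sup moves by at most the
uniform distance of its arguments. Where `φ i > ψ i` the constraint is inactive for `ψ i`, so `ψ i`
solves the equation while `φ i` is a supersolution; following `φ i - ψ i` from `t` until it first
vanishes (at the latest at `T`, where both equal `g`) gives `φ t i - ψ t i ≤ L ∫_t^T ‖φ - ψ‖`.
By symmetry `‖φ t - ψ t‖ ≤ L ∫_t^T ‖φ - ψ‖`, and the backward Grönwall inequality forces `φ = ψ`.
-/

open Set MeasureTheory

/-- A real function is absolutely continuous on `[0,T]`: it is the integral of an
integrable function. -/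
def IsAC (T : ℝ) (φ : ℝ → ℝ) : Prop :=
  ∃ f : ℝ → ℝ, MeasureTheory.IntegrableOn f (Set.Icc 0 T) ∧
    ∀ t ∈ Set.Icc 0 T, φ t = φ 0 + ∫ s in (0:ℝ)..t, f s

open Function Bornology

section InfSup

variable {U V : Type*} [Nonempty U] [Nonempty V]

theorem iInf_iSup_le_add {A B : U → V → ℝ} (hA : IsBounded (range (uncurry A)))
    (hB : BddAbove (range (uncurry B))) {ε : ℝ} (h : ∀ u v, A u v ≤ B u v + ε) :
    ⨅ u, ⨆ v, A u v ≤ (⨅ u, ⨆ v, B u v) + ε := by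
  obtain ⟨m, hm⟩ := hA.bddBelow
  obtain ⟨M, hM⟩ := hA.bddAbove
  have hAu (u : U) : BddAbove (range (A u)) :=
    ⟨M, forall_mem_range.2 fun v => hM (mem_range_self (u, v))⟩
  have hBu (u : U) : BddAbove (range (B u)) :=
    hB.mono (range_subset_iff.2 fun v => mem_range_self (u, v))
  have hA' : BddBelow (range fun u => ⨆ v, A u v) :=
    ⟨m, forall_mem_range.2 fun u =>
      (hm (mem_range_self (u, Classical.arbitrary V))).trans (le_ciSup (hAu u) _)⟩
  rw [← sub_le_iff_le_add]
  refine le_ciInf fun u => sub_le_iff_le_add.2 <| (ciInf_le hA' u).trans <| ciSup_le fun v => ?_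
  exact (h u v).trans ((add_le_add_iff_right ε).2 (le_ciSup (hBu u) v))

theorem abs_iInf_iSup_sub_le {A B : U → V → ℝ} (hA : IsBounded (range (uncurry A)))
    (hB : IsBounded (range (uncurry B))) {ε : ℝ} (h : ∀ u v, |A u v - B u v| ≤ ε) :
    |(⨅ u, ⨆ v, A u v) - ⨅ u, ⨆ v, B u v| ≤ ε := by
  rw [abs_sub_le_iff, sub_le_iff_le_add', sub_le_iff_le_add']
  exact ⟨iInf_iSup_le_add hA hB.bddAbove fun u v => by linarith [abs_le.1 (h u v)],
    iInf_iSup_le_add hB hA.bddAbove fun u v => by linarith [abs_le.1 (h u v)]⟩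

theorem abs_sum_mul_sub_sum_mul_le {ι : Type*} [Fintype ι] (q w w' : ι → ℝ) :
    |∑ j, q j * w j - ∑ j, q j * w' j| ≤ (∑ j, |q j|) * ‖w - w'‖ := by
  rw [← Finset.sum_sub_distrib, Finset.sum_mul]
  refine (Finset.abs_sum_le_sum_abs _ _).trans (Finset.sum_le_sum fun j _ => ?_)
  rw [← mul_sub, abs_mul]
  exact mul_le_mul_of_nonneg_left (norm_le_pi_norm (w - w') j) (abs_nonneg _)

theorem abs_iInf_iSup_affine_sub_le {ι : Type*} [Fintype ι] [TopologicalSpace U] [CompactSpace U]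
    [TopologicalSpace V] [CompactSpace V] {q : U → V → ι → ℝ} {r : U → V → ℝ}
    (hq : ∀ j, Continuous fun p : U × V => q p.1 p.2 j)
    (hr : Continuous fun p : U × V => r p.1 p.2) {C : ℝ} (hC : ∀ u v, ∑ j, |q u v j| ≤ C)
    (w w' : ι → ℝ) :
    |(⨅ u, ⨆ v, ∑ j, q u v j * w j + r u v) - ⨅ u, ⨆ v, ∑ j, q u v j * w' j + r u v| ≤
      C * ‖w - w'‖ := by
  have hbdd (w : ι → ℝ) : IsBounded (range (uncurry fun u v => ∑ j, q u v j * w j + r u v)) :=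
    (isCompact_range ((continuous_finsetSum _ fun j _ => (hq j).mul continuous_const).add
      hr)).isBounded
  refine abs_iInf_iSup_sub_le (hbdd w) (hbdd w') fun u v => ?_
  rw [add_sub_add_right_eq_sub]
  exact (abs_sum_mul_sub_sum_mul_le _ w w').trans
    (mul_le_mul_of_nonneg_right (hC u v) (norm_nonneg _))

end InfSup

theorem IsCompact.exists_forall_sum_abs_le {X ι κ : Type*} [TopologicalSpace X] [Fintype ι]
    [Fintype κ] {K : Set X} (hK : IsCompact K) {Q : X → ι → κ → ℝ}
    (hQ : ∀ i j, Continuous fun x => Q x i j) : ∃ C, ∀ x ∈ K, ∀ i, ∑ j, |Q x i j| ≤ C := by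
  obtain ⟨C, hC⟩ := hK.exists_bound_of_continuousOn (f := fun x i => ∑ j, |Q x i j|)
    (continuous_pi fun i => continuous_finsetSum _ fun j _ => (hQ i j).abs).continuousOn
  exact ⟨C, fun x hx i => (le_abs_self _).trans ((norm_le_pi_norm _ i).trans (hC x hx))⟩

theorem eqOn_zero_of_le_mul_integral {E : ℝ → ℝ} {K a b : ℝ} (hE : ContinuousOn E (Icc a b))
    (hE0 : ∀ t ∈ Icc a b, 0 ≤ E t) (h : ∀ t ∈ Icc a b, E t ≤ K * ∫ s in t..b, E s) :
    ∀ t ∈ Icc a b, E t = 0 := by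
  rcases lt_or_ge b a with hba | hab
  · simp [Icc_eq_empty_of_lt hba]
  set E' := IccExtend hab ((Icc a b).domRestrict E)
  have hE'c : Continuous E' := hE.domRestrict.Icc_extend'
  have hE' : EqOn E' E (Icc a b) := fun t ht => IccExtend_of_mem hab _ ht
  -- time reversal, so that the forward Grönwall lemma applies from `G (-b) = 0`
  set G : ℝ → ℝ := fun x => ∫ s in -b..x, E' (-s)
  have hG (x : ℝ) : HasDerivAt G (E' (-x)) x :=
    ((hE'c.comp continuous_neg).integral_hasStrictDerivAt _ x).hasDerivAt
  have hGneg : ∀ t ∈ Icc a b, G (-t) = ∫ s in t..b, E s := by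
    intro t ht
    simp only [G, intervalIntegral.integral_comp_neg (fun s => E' s), neg_neg]
    exact intervalIntegral.integral_congr fun s hs =>
      hE' (Icc_subset_Icc ht.1 le_rfl (uIcc_of_le ht.2 ▸ hs))
  have hG0 := eq_zero_of_abs_deriv_le_mul_abs_self_of_eq_zero_right (K := K) (a := -b) (b := -a)
    (fun x _ => (hG x).continuousAt.continuousWithinAt) (fun x _ => (hG x).hasDerivWithinAt)
    intervalIntegral.integral_same ?_
  · intro t ht
    refine le_antisymm ?_ (hE0 t ht)
    simpa [← hGneg t ht, hG0 (-t) ⟨neg_le_neg ht.2, neg_le_neg ht.1⟩] using h t ht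
  · intro x hx
    have hx' : -x ∈ Icc a b := ⟨le_neg.2 hx.2.le, neg_le.1 hx.1⟩
    have hint : 0 ≤ ∫ s in -x..b, E s :=
      intervalIntegral.integral_nonneg hx'.2 fun s hs => hE0 s ⟨hx'.1.trans hs.1, hs.2⟩
    rw [Real.norm_eq_abs, Real.norm_eq_abs, hE' hx', abs_of_nonneg (hE0 _ hx'),
      ← neg_neg x, hGneg _ hx', neg_neg, abs_of_nonneg hint]
    exact h _ hx'

theorem continuousOn_of_sub_eq_integral {a b : ℝ} {w f : ℝ → ℝ} (hf : IntegrableOn f (Icc a b))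
    (hw : ∀ x ∈ Icc a b, ∀ y ∈ Icc a b, w y - w x = ∫ s in x..y, f s) :
    ContinuousOn w (Icc a b) := by
  rcases lt_or_ge b a with hba | hab
  · simp [Icc_eq_empty_of_lt hba]
  rw [← uIcc_of_le hab] at hf hw ⊢
  refine ((continuousOn_const (c := w a)).add
    (intervalIntegral.continuousOn_primitive_interval hf)).congr fun y hy => ?_
  simp [← hw a left_mem_uIcc y hy]

theorem le_integral_of_neg_deriv_le_of_pos {a b : ℝ} {w f G : ℝ → ℝ} (hab : a ≤ b)
    (hf : IntegrableOn f (Icc a b))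
    (hw : ∀ x ∈ Icc a b, ∀ y ∈ Icc a b, w y - w x = ∫ s in x..y, f s)
    (hG : IntegrableOn G (Icc a b)) (hG0 : ∀ s ∈ Icc a b, 0 ≤ G s) (hwb : w b ≤ 0)
    (hpos : ∀ᵐ s ∂volume.restrict (Icc a b), 0 < w s → -f s ≤ G s) :
    w a ≤ ∫ s in a..b, G s := by
  by_cases hwa : w a ≤ 0
  · exact hwa.trans (intervalIntegral.integral_nonneg hab hG0)
  set Z := Icc a b ∩ w ⁻¹' Iic 0
  have hZ : IsClosed Z :=
    (continuousOn_of_sub_eq_integral hf hw).preimage_isClosed_of_isClosed isClosed_Icc isClosed_Iic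
  have hbZ : b ∈ Z := ⟨right_mem_Icc.2 hab, hwb⟩
  have hZbdd : BddBelow Z := ⟨a, fun s hs => hs.1.1⟩
  set τ := sInf Z
  have hτZ : τ ∈ Z := hZ.csInf_mem ⟨b, hbZ⟩ hZbdd
  have hτb : τ ≤ b := hτZ.1.2
  have hwpos : ∀ s ∈ Ioo a τ, 0 < w s := fun s hs => not_le.1 fun hle =>
    hs.2.not_ge (csInf_le hZbdd ⟨⟨hs.1.le, hs.2.le.trans hτb⟩, hle⟩)
  have hsub : Icc a τ ⊆ Icc a b := Icc_subset_Icc le_rfl hτb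
  have hint {g : ℝ → ℝ} (hg : IntegrableOn g (Icc a b)) : IntervalIntegrable g volume a τ :=
    (intervalIntegrable_iff_integrableOn_Icc_of_le hτZ.1.1).2 (hg.mono_set hsub)
  have hfG : ∫ s in a..τ, -f s ≤ ∫ s in a..τ, G s := by
    refine intervalIntegral.integral_mono_ae_restrict hτZ.1.1 (hint hf).neg (hint hG) ?_
    rw [Measure.restrict_congr_set Ioo_ae_eq_Icc.symm]
    filter_upwards [ae_restrict_mem measurableSet_Ioo,
      ae_restrict_of_ae_restrict_of_subset (Ioo_subset_Icc_self.trans hsub) hpos]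
      with s hs hfs using hfs (hwpos s hs)
  calc w a = w τ - ∫ s in a..τ, f s := by linarith [hw a (left_mem_Icc.2 hab) τ hτZ.1]
    _ ≤ ∫ s in a..τ, -f s := by
      rw [intervalIntegral.integral_neg]; linarith [show w τ ≤ 0 from hτZ.2]
    _ ≤ ∫ s in a..τ, G s := hfG
    _ ≤ ∫ s in a..b, G s :=
      intervalIntegral.integral_mono_interval le_rfl hτZ.1.1 hτb
        ((ae_restrict_mem measurableSet_Ioc).mono fun s hs => hG0 s (Ioc_subset_Icc_self hs))
        ((intervalIntegrable_iff_integrableOn_Icc_of_le hab).2 hG)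

namespace IsAC

variable {T : ℝ} {φ : ℝ → ℝ}

theorem exists_integral_and_ae_hasDerivAt (hφ : IsAC T φ) :
    ∃ f : ℝ → ℝ, IntegrableOn f (Icc 0 T) ∧
      (∀ x ∈ Icc 0 T, ∀ y ∈ Icc 0 T, φ y - φ x = ∫ s in x..y, f s) ∧
      ∀ᵐ t ∂volume.restrict (Icc 0 T), HasDerivAt φ (f t) t := by
  obtain ⟨f, hf, hφf⟩ := hφ
  refine ⟨f, hf, fun x hx y hy => ?_, ?_⟩
  · have hint {z : ℝ} (hz : z ∈ Icc 0 T) : IntervalIntegrable f volume 0 z :=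
      (intervalIntegrable_iff_integrableOn_Icc_of_le hz.1).2
        (hf.mono_set (Icc_subset_Icc le_rfl hz.2))
    rw [hφf y hy, hφf x hx, add_sub_add_left_eq_sub,
      intervalIntegral.integral_interval_sub_left (hint hy) (hint hx)]
  rcases lt_or_ge T 0 with hT | hT
  · simp [Icc_eq_empty_of_lt hT]
  rw [Measure.restrict_congr_set Ioo_ae_eq_Icc.symm]
  filter_upwards [ae_restrict_mem measurableSet_Ioo, ae_restrict_of_ae
    ((intervalIntegrable_iff_integrableOn_Icc_of_le hT).2 hf).ae_hasDerivAt_integral]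
    with t ht hderiv
  have hmem {s : ℝ} (hs : s ∈ Ioo 0 T) : s ∈ uIcc 0 T := Icc_subset_uIcc (Ioo_subset_Icc_self hs)
  refine (((hderiv (hmem ht)) 0 left_mem_uIcc).const_add (φ 0)).congr_of_eventuallyEq ?_
  filter_upwards [isOpen_Ioo.mem_nhds ht] with s hs using hφf s (Ioo_subset_Icc_self hs)

theorem continuousOn (hφ : IsAC T φ) : ContinuousOn φ (Icc 0 T) :=
  let ⟨_, hf, hφf, _⟩ := hφ.exists_integral_and_ae_hasDerivAt
  continuousOn_of_sub_eq_integral hf hφf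

end IsAC

/-- Absolutely continuous solutions of `min (φ' - F t φ, g - φ) = 0` a.e. on `[0, T]`,
`φ T = g T`; the Zachrisson equation is the case `F t w i = -H i t w`. -/
structure IsObstacleSolution {ι : Type*} (T : ℝ) (F : ℝ → (ι → ℝ) → ι → ℝ) (g φ : ℝ → ι → ℝ) :
    Prop where
  isAC : ∀ i, IsAC T fun t => φ t i
  terminal : ∀ i, φ T i = g T i
  le_obstacle : ∀ t ∈ Icc 0 T, ∀ i, φ t i ≤ g t i
  ae_hasDerivAt : ∀ i, ∀ᵐ t ∂volume.restrict (Icc 0 T), ∀ D : ℝ,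
    HasDerivAt (fun s => φ s i) D t → (φ t i < g t i → D ≤ F t (φ t) i) ∧ F t (φ t) i ≤ D

namespace IsObstacleSolution

variable {ι : Type*} {T : ℝ} {F : ℝ → (ι → ℝ) → ι → ℝ} {g φ ψ : ℝ → ι → ℝ}

theorem continuousOn (hφ : IsObstacleSolution T F g φ) : ContinuousOn φ (Icc 0 T) :=
  continuousOn_pi.2 fun i => (hφ.isAC i).continuousOn

variable [Fintype ι]

theorem sub_le_integral (hφ : IsObstacleSolution T F g φ) (hψ : IsObstacleSolution T F g ψ)
    {L : ℝ} (hL : 0 ≤ L) (hF : ∀ t ∈ Icc 0 T, ∀ w w' i, |F t w i - F t w' i| ≤ L * ‖w - w'‖)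
    {t : ℝ} (ht : t ∈ Icc 0 T) (i : ι) : φ t i - ψ t i ≤ L * ∫ s in t..T, ‖φ s - ψ s‖ := by
  obtain ⟨f, hf, hφf, hφd⟩ := (hφ.isAC i).exists_integral_and_ae_hasDerivAt
  obtain ⟨f', hf', hψf, hψd⟩ := (hψ.isAC i).exists_integral_and_ae_hasDerivAt
  have hsub : Icc t T ⊆ Icc 0 T := Icc_subset_Icc_left ht.1
  have hE : ContinuousOn (fun s => L * ‖φ s - ψ s‖) (Icc t T) :=
    (continuousOn_const.mul (hφ.continuousOn.sub hψ.continuousOn).norm).mono hsub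
  rw [← intervalIntegral.integral_const_mul]
  refine le_integral_of_neg_deriv_le_of_pos (w := fun s => φ s i - ψ s i)
    (f := fun s => f s - f' s) ht.2 ((hf.sub hf').mono_set hsub) (fun x hx y hy => ?_)
    (hE.integrableOn_compact isCompact_Icc) (fun s _ => by positivity)
    (by simp [hφ.terminal, hψ.terminal]) ?_
  · have hint {k : ℝ → ℝ} (hk : IntegrableOn k (Icc 0 T)) : IntervalIntegrable k volume x y :=
      (hk.mono_set (uIcc_subset_Icc (hsub hx) (hsub hy))).intervalIntegrable
    rw [intervalIntegral.integral_sub (hint hf) (hint hf')]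
    linarith [hφf x (hsub hx) y (hsub hy), hψf x (hsub hx) y (hsub hy)]
  filter_upwards [ae_restrict_mem measurableSet_Icc,
    ae_restrict_of_ae_restrict_of_subset hsub (hφ.ae_hasDerivAt i),
    ae_restrict_of_ae_restrict_of_subset hsub (hψ.ae_hasDerivAt i),
    ae_restrict_of_ae_restrict_of_subset hsub hφd, ae_restrict_of_ae_restrict_of_subset hsub hψd]
    with s hs hφs hψs hφds hψds hpos
  have hψg : ψ s i < g s i := (sub_pos.1 hpos).trans_le (hφ.le_obstacle s (hsub hs) i)
  have hlip := abs_le.1 (hF s (hsub hs) (φ s) (ψ s) i)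
  linarith [(hφs _ hφds).2, (hψs _ hψds).1 hψg]

theorem eqOn (hφ : IsObstacleSolution T F g φ) (hψ : IsObstacleSolution T F g ψ) {L : ℝ}
    (hF : ∀ t ∈ Icc 0 T, ∀ w w' i, |F t w i - F t w' i| ≤ L * ‖w - w'‖) :
    EqOn φ ψ (Icc 0 T) := by
  have hL : 0 ≤ max L 0 := le_max_right L 0
  have hF' : ∀ t ∈ Icc 0 T, ∀ w w' i, |F t w i - F t w' i| ≤ max L 0 * ‖w - w'‖ :=
    fun t ht w w' i =>
      (hF t ht w w' i).trans (mul_le_mul_of_nonneg_right (le_max_left L 0) (norm_nonneg _))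
  have hgronwall : ∀ t ∈ Icc 0 T, ‖φ t - ψ t‖ ≤ max L 0 * ∫ s in t..T, ‖φ s - ψ s‖ := by
    intro t ht
    have hnonneg : 0 ≤ ∫ s in t..T, ‖φ s - ψ s‖ :=
      intervalIntegral.integral_nonneg ht.2 fun _ _ => norm_nonneg _
    refine (pi_norm_le_iff_of_nonneg (by positivity)).2 fun i => abs_le.2 ⟨?_, ?_⟩
    · have := hψ.sub_le_integral hφ hL hF' ht i
      simp only [norm_sub_rev (ψ _)] at this
      simp only [Pi.sub_apply]
      linarith
    · exact hφ.sub_le_integral hψ hL hF' ht i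
  have hzero := eqOn_zero_of_le_mul_integral (hφ.continuousOn.sub hψ.continuousOn).norm
    (fun _ _ => norm_nonneg _) hgronwall
  exact fun t ht => sub_eq_zero.1 (norm_eq_zero.1 (hzero t ht))

end IsObstacleSolution

theorem zachrisson_uniqueness_general {d : ℕ} {T : ℝ}
    {U V : Type*} [MetricSpace U] [CompactSpace U] [Nonempty U]
    [MetricSpace V] [CompactSpace V] [Nonempty V]
    (Q : ℝ → U → V → Fin d → Fin d → ℝ) (h : ℝ → Fin d → U → V → ℝ)
    (g : ℝ → Fin d → ℝ)
    (hQc : ∀ i j, Continuous fun p : ℝ × U × V => Q p.1 p.2.1 p.2.2 i j)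
    (hhc : ∀ i, Continuous fun p : ℝ × U × V => h p.1 i p.2.1 p.2.2)
    (Ham : Fin d → ℝ → (Fin d → ℝ) → ℝ)
    (hHamDef : ∀ i t w, Ham i t w =
      ⨅ u : U, ⨆ v : V, (∑ j, Q t u v i j * w j + h t i u v))
    (φ ψ : ℝ → Fin d → ℝ)
    (hφAC : ∀ i, IsAC T (fun t => φ t i)) (hψAC : ∀ i, IsAC T (fun t => ψ t i))
    (hφ1 : ∀ i, φ T i = g T i) (hψ1 : ∀ i, ψ T i = g T i)
    (hφ2 : ∀ t ∈ Icc 0 T, ∀ i, φ t i ≤ g t i)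
    (hψ2 : ∀ t ∈ Icc 0 T, ∀ i, ψ t i ≤ g t i)
    (hφ34 : ∀ i, ∀ᵐ t ∂(volume.restrict (Icc 0 T)), ∀ D : ℝ,
      HasDerivAt (fun s => φ s i) D t →
        (φ t i < g t i → D ≤ -(Ham i t (φ t))) ∧ -(Ham i t (φ t)) ≤ D)
    (hψ34 : ∀ i, ∀ᵐ t ∂(volume.restrict (Icc 0 T)), ∀ D : ℝ,
      HasDerivAt (fun s => ψ s i) D t →
        (ψ t i < g t i → D ≤ -(Ham i t (ψ t))) ∧ -(Ham i t (ψ t)) ≤ D) :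
    ∀ t ∈ Icc 0 T, ∀ i, φ t i = ψ t i := by
  obtain ⟨C, hC⟩ := (isCompact_Icc.prod (isCompact_univ (X := U × V))).exists_forall_sum_abs_le
    (Q := fun p i j => Q p.1 p.2.1 p.2.2 i j) hQc
  have hHam : ∀ t ∈ Icc 0 T, ∀ w w' i, |-Ham i t w - -Ham i t w'| ≤ C * ‖w - w'‖ := by
    intro t ht w w' i
    rw [neg_sub_neg, abs_sub_comm, hHamDef, hHamDef]
    exact abs_iInf_iSup_affine_sub_le (fun j => (hQc i j).comp (Continuous.prodMk_right t))
      ((hhc i).comp (Continuous.prodMk_right t)) (fun u v => hC (t, u, v) ⟨ht, mem_univ _⟩ i) w w'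
  have hφ : IsObstacleSolution T (fun t w i => -Ham i t w) g φ := ⟨hφAC, hφ1, hφ2, hφ34⟩
  have hψ : IsObstacleSolution T (fun t w i => -Ham i t w) g ψ := ⟨hψAC, hψ1, hψ2, hψ34⟩
  exact fun t ht i => congrFun (hφ.eqOn hψ hHam ht) i

/-- uniqueness of solutions of the Zachrisson equation with unilateral
constraints (conditions (i)–(iv) holding a.e.). -/
theorem zachrisson_uniqueness {d : ℕ} {T Lg Mh : ℝ} (hT : 0 ≤ T)
    {U V : Type*} [MetricSpace U] [CompactSpace U] [Nonempty U]
    [MetricSpace V] [CompactSpace V] [Nonempty V]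
    (Q : ℝ → U → V → Fin d → Fin d → ℝ) (h : ℝ → Fin d → U → V → ℝ)
    (g : ℝ → Fin d → ℝ)
    (hQc : ∀ i j, Continuous fun p : ℝ × U × V => Q p.1 p.2.1 p.2.2 i j)
    (hhc : ∀ i, Continuous fun p : ℝ × U × V => h p.1 i p.2.1 p.2.2)
    (hhb : ∀ t i u v, |h t i u v| ≤ Mh)
    (hQpos : ∀ t u v i j, i ≠ j → 0 ≤ Q t u v i j)
    (hQsum : ∀ t u v i, ∑ j, Q t u v i j = 0)
    (hLg : ∀ i, ∀ s r : ℝ, |g s i - g r i| ≤ Lg * |s - r|)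
    (Ham : Fin d → ℝ → (Fin d → ℝ) → ℝ)
    (hHamDef : ∀ i t w, Ham i t w =
      ⨅ u : U, ⨆ v : V, (∑ j, Q t u v i j * w j + h t i u v))
    (hIsaacs : ∀ i t (w : Fin d → ℝ),
      (⨅ u : U, ⨆ v : V, (∑ j, Q t u v i j * w j + h t i u v)) =
        (⨆ v : V, ⨅ u : U, (∑ j, Q t u v i j * w j + h t i u v)))
    (φ ψ : ℝ → Fin d → ℝ)
    (hφAC : ∀ i, IsAC T (fun t => φ t i)) (hψAC : ∀ i, IsAC T (fun t => ψ t i))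
    (hφ1 : ∀ i, φ T i = g T i) (hψ1 : ∀ i, ψ T i = g T i)
    (hφ2 : ∀ t ∈ Icc 0 T, ∀ i, φ t i ≤ g t i)
    (hψ2 : ∀ t ∈ Icc 0 T, ∀ i, ψ t i ≤ g t i)
    (hφ34 : ∀ i, ∀ᵐ t ∂(volume.restrict (Icc 0 T)), ∀ D : ℝ,
      HasDerivAt (fun s => φ s i) D t →
        (φ t i < g t i → D ≤ -(Ham i t (φ t))) ∧ -(Ham i t (φ t)) ≤ D)
    (hψ34 : ∀ i, ∀ᵐ t ∂(volume.restrict (Icc 0 T)), ∀ D : ℝ,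
      HasDerivAt (fun s => ψ s i) D t →
        (ψ t i < g t i → D ≤ -(Ham i t (ψ t))) ∧ -(Ham i t (ψ t)) ≤ D) :
    ∀ t ∈ Icc 0 T, ∀ i, φ t i = ψ t i :=
  zachrisson_uniqueness_general Q h g hQc hhc Ham hHamDef φ ψ hφAC hψAC hφ1 hψ1 hφ2 hψ2 hφ34 hψ34
end

section
/- With φ_N defined by the recursive scheme (φ_N(T,i) = g(T,i); ψ_N^k solving the backward ODE dψ/dt = -H_i(t,ψ(t)) on [t_N^k, t_N^{k+1}] with terminal data φ_N(t_N^{k+1}); φ_N = min(ψ_N^k, g) on each subinterval), there exists a constant C_1 depending only on M_g, M_h, M_Q, d, T such that |φ_N(t,i)| ≤ C_1 for all N ∈ ℕ, t ∈ [0,T], i ∈ S. One may take C_1 = (M_g + M_h·T)·e^{d·M_Q·T}. -/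
/-!
Put `K = d·M_Q` and `𝓜(t) = (M_g + M_h (T - t)) e^{K (T - t)}`. On a grid interval `[a, b]`
the solution `ψ` of the backward equation satisfies `‖ψ'‖ ≤ K ‖ψ‖ + M_h`, so time-reversed
Gronwall bounds `‖ψ(t)‖` by `(𝓜(b) + M_h (b - t)) e^{K (b - t)} ≤ 𝓜(t)` once `‖ψ(b)‖ ≤ 𝓜(b)`.
Taking the minimum with `g`, which is bounded by `M_g ≤ 𝓜(t)`, keeps the bound, and backward
induction over the grid starting from `𝓜(T) = M_g` gives `|φ| ≤ 𝓜 ≤ 𝓜(0) = C₁`.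
-/

open Set

theorem nonneg_of_forall_nonneg_mul_add {K ε : ℝ} (h : ∀ c : ℝ, 0 ≤ c → 0 ≤ K * c + ε) :
    0 ≤ K ∧ 0 ≤ ε := by
  have hε : 0 ≤ ε := by simpa using h 0 le_rfl
  refine ⟨not_lt.1 fun hK => ?_, hε⟩
  have := h ((ε + 1) / -K) (div_nonneg (by linarith) (by linarith))
  rw [mul_div_assoc', div_neg, mul_div_cancel_left₀ _ hK.ne] at this
  linarith

theorem Real.exp_sub_one_le_mul_exp (y : ℝ) : Real.exp y - 1 ≤ y * Real.exp y := by
  have h := mul_le_mul_of_nonneg_left (Real.add_one_le_exp (-y)) (Real.exp_pos y).le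
  rw [← Real.exp_add, add_neg_cancel, Real.exp_zero] at h
  linarith

theorem gronwallBound_le_add_mul_exp {δ K ε x : ℝ} (hK : 0 ≤ K) (hε : 0 ≤ ε) :
    gronwallBound δ K ε x ≤ (δ + ε * x) * Real.exp (K * x) := by
  rcases hK.eq_or_lt with rfl | hK
  · simp [gronwallBound_K0]
  · calc gronwallBound δ K ε x
        = δ * Real.exp (K * x) + ε / K * (Real.exp (K * x) - 1) := by
          rw [gronwallBound_of_K_ne_0 hK.ne']
      _ ≤ δ * Real.exp (K * x) + ε / K * (K * x * Real.exp (K * x)) := by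
          gcongr; exact Real.exp_sub_one_le_mul_exp _
      _ = (δ + ε * x) * Real.exp (K * x) := by field_simp

theorem norm_le_gronwallBound_of_hasDerivAt_backward {E : Type*} [NormedAddCommGroup E]
    [NormedSpace ℝ E] {f f' : ℝ → E} {a b δ K ε : ℝ}
    (hf : ∀ t ∈ Icc a b, HasDerivAt f (f' t) t)
    (hbound : ∀ t ∈ Icc a b, ‖f' t‖ ≤ K * ‖f t‖ + ε) (hb : ‖f b‖ ≤ δ) :
    ∀ t ∈ Icc a b, ‖f t‖ ≤ gronwallBound δ K ε (b - t) := by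
  have hrev : ∀ x ∈ Icc (-b) (-a), HasDerivAt (fun x => f (-x)) (-f' (-x)) x := fun x hx => by
    simpa [Function.comp_def] using
      (hf (-x) ⟨le_neg.2 hx.2, neg_le.1 hx.1⟩).scomp x (hasDerivAt_neg x)
  intro t ht
  simpa [sub_eq_add_neg, add_comm] using norm_le_gronwallBound_of_norm_deriv_right_le
    (fun x hx => (hrev x hx).continuousAt.continuousWithinAt)
    (fun x hx => (hrev x (Ico_subset_Icc_self hx)).hasDerivWithinAt)
    (by simpa using hb)
    (fun x hx => by simpa using hbound (-x) ⟨le_neg.2 hx.2.le, neg_le.1 hx.1⟩)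
    (-t) ⟨neg_le_neg ht.2, neg_le_neg ht.1⟩

noncomputable def schemeBound (Mg Mh K T t : ℝ) : ℝ :=
  (Mg + Mh * (T - t)) * Real.exp (K * (T - t))

section schemeBound

variable {Mg Mh K T : ℝ}

@[simp]
theorem schemeBound_self : schemeBound Mg Mh K T T = Mg := by
  simp [schemeBound]

theorem schemeBound_antitoneOn (hMg : 0 ≤ Mg) (hMh : 0 ≤ Mh) (hK : 0 ≤ K) :
    AntitoneOn (schemeBound Mg Mh K T) (Iic T) := by
  intro s hs t ht hst
  unfold schemeBound
  gcongr
  nlinarith [mem_Iic.1 hs]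

theorem le_schemeBound (hMg : 0 ≤ Mg) (hMh : 0 ≤ Mh) (hK : 0 ≤ K) {t : ℝ} (ht : t ≤ T) :
    Mg ≤ schemeBound Mg Mh K T t := by
  simpa using schemeBound_antitoneOn hMg hMh hK ht self_mem_Iic ht

theorem gronwallBound_schemeBound_le (hMh : 0 ≤ Mh) (hK : 0 ≤ K) {t b : ℝ} (htb : t ≤ b)
    (hbT : b ≤ T) :
    gronwallBound (schemeBound Mg Mh K T b) K Mh (b - t) ≤ schemeBound Mg Mh K T t := by
  refine (gronwallBound_le_add_mul_exp hK hMh).trans ?_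
  calc (schemeBound Mg Mh K T b + Mh * (b - t)) * Real.exp (K * (b - t))
      = (Mg + Mh * (T - b)) * Real.exp (K * (T - t))
          + Mh * (b - t) * Real.exp (K * (b - t)) := by
        rw [schemeBound, add_mul, mul_assoc, ← Real.exp_add]; ring_nf
    _ ≤ (Mg + Mh * (T - b)) * Real.exp (K * (T - t))
          + Mh * (b - t) * Real.exp (K * (T - t)) := by
        gcongr
    _ = schemeBound Mg Mh K T t := by unfold schemeBound; ring

end schemeBound

theorem Pi.norm_inf_le_max {ι : Type*} [Fintype ι] (x y : ι → ℝ) : ‖x ⊓ y‖ ≤ max ‖x‖ ‖y‖ :=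
  (pi_norm_le_iff_of_nonneg ((norm_nonneg x).trans (le_max_left _ _))).2 fun i =>
    (abs_min_le_max_abs_abs).trans (max_le_max (norm_le_pi_norm x i) (norm_le_pi_norm y i))

theorem Pi.iSup_abs_le_norm {ι : Type*} [Fintype ι] (w : ι → ℝ) : ⨆ j, |w j| ≤ ‖w‖ :=
  Real.iSup_le (fun j => norm_le_pi_norm w j) (norm_nonneg w)

theorem norm_le_schemeBound_of_grid {ι : Type*} [Fintype ι] {Mg Mh K T : ℝ}
    (hMg : 0 ≤ Mg) (hMh : 0 ≤ Mh) (hK : 0 ≤ K) {τ : ℕ → ℝ} {N : ℕ} (hτ : Monotone τ)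
    (hτN : τ N = T) {φ g : ℝ → ι → ℝ} {ψ F : ℕ → ℝ → ι → ℝ}
    (hg : ∀ t ∈ Icc (τ 0) T, ‖g t‖ ≤ Mg) (hφT : φ T = g T)
    (hψ : ∀ k < N, ∀ t ∈ Icc (τ k) (τ (k + 1)), HasDerivAt (ψ k) (F k t) t)
    (hF : ∀ k < N, ∀ t ∈ Icc (τ k) (τ (k + 1)), ‖F k t‖ ≤ K * ‖ψ k t‖ + Mh)
    (hψφ : ∀ k < N, ψ k (τ (k + 1)) = φ (τ (k + 1)))
    (hφ : ∀ k < N, ∀ t ∈ Icc (τ k) (τ (k + 1)), φ t = ψ k t ⊓ g t) :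
    ∀ t ∈ Icc (τ 0) T, ‖φ t‖ ≤ schemeBound Mg Mh K T t := by
  have hτT : ∀ k ≤ N, τ k ≤ T := fun k hk => hτN ▸ hτ hk
  suffices ∀ k ≤ N, ∀ t ∈ Icc (τ k) T, ‖φ t‖ ≤ schemeBound Mg Mh K T t from this 0 N.zero_le
  intro k hk
  induction hk using Nat.decreasingInduction with
  | self =>
    rintro t ⟨hNt, htT⟩
    obtain rfl : t = T := le_antisymm htT (hτN ▸ hNt)
    simpa [hφT] using hg t ⟨hτT 0 N.zero_le, le_rfl⟩
  | of_succ k hk ih =>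
    rintro t ⟨hkt, htT⟩
    rcases le_or_gt t (τ (k + 1)) with htk | htk
    · have hψb : ‖ψ k (τ (k + 1))‖ ≤ schemeBound Mg Mh K T (τ (k + 1)) :=
        hψφ k hk ▸ ih _ ⟨le_rfl, hτT _ hk⟩
      have hψt :=
        norm_le_gronwallBound_of_hasDerivAt_backward (hψ k hk) (hF k hk) hψb t ⟨hkt, htk⟩
      have hgt := hg t ⟨(hτ k.zero_le).trans hkt, htT⟩
      rw [hφ k hk t ⟨hkt, htk⟩]
      exact (Pi.norm_inf_le_max _ _).trans <| max_le
        (hψt.trans (gronwallBound_schemeBound_le hMh hK htk (hτT _ hk)))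
        (hgt.trans (le_schemeBound hMg hMh hK htT))
    · exact ih t ⟨htk.le, htT⟩

theorem scheme_uniform_bound_general {d : ℕ} {T MQ Mh Mg : ℝ}
    (H : Fin d → ℝ → (Fin d → ℝ) → ℝ) (g : ℝ → Fin d → ℝ)
    (hH : ∀ i t w, |H i t w| ≤ (d : ℝ) * MQ * (⨆ j, |w j|) + Mh)
    (hMg : ∀ t ∈ Icc 0 T, ∀ i, |g t i| ≤ Mg) :
    ∀ (N : ℕ), 0 < N → ∀ (φ : ℝ → Fin d → ℝ) (ψ : ℕ → ℝ → Fin d → ℝ),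
      (∀ i, φ T i = g T i) →
      (∀ k < N, ∀ t ∈ Icc (T * k / N) (T * (k + 1) / N), ∀ i,
        HasDerivAt (fun s => ψ k s i) (-(H i t (ψ k t))) t) →
      (∀ k < N, ∀ i, ψ k (T * (k + 1) / N) i = φ (T * (k + 1) / N) i) →
      (∀ k < N, ∀ t ∈ Icc (T * k / N) (T * (k + 1) / N), ∀ i,
        φ t i = min (ψ k t i) (g t i)) →
      ∀ t ∈ Icc 0 T, ∀ i,
        |φ t i| ≤ (Mg + Mh * T) * Real.exp ((d : ℝ) * MQ * T) := by
  intro N hN φ ψ hφT hD hψφ hmin t ht i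
  simp only [← Nat.cast_succ] at hD hψφ hmin
  have : Nonempty (Fin d) := ⟨i⟩
  obtain ⟨hK, hMh⟩ := nonneg_of_forall_nonneg_mul_add fun c hc => by
    simpa [abs_of_nonneg hc] using (abs_nonneg _).trans (hH i 0 fun _ => c)
  have hMg₀ : 0 ≤ Mg := (abs_nonneg _).trans (hMg t ht i)
  have hT : 0 ≤ T := ht.1.trans ht.2
  have hF : ∀ k t, ‖fun i => -H i t (ψ k t)‖ ≤ (d : ℝ) * MQ * ‖ψ k t‖ + Mh := fun k t =>
    (pi_norm_le_iff_of_nonneg (by positivity)).2 fun i => by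
      simpa using (hH i t (ψ k t)).trans (by gcongr; exact Pi.iSup_abs_le_norm _)
  have hφt := norm_le_schemeBound_of_grid (τ := fun k : ℕ => T * k / N)
    (F := fun k t i => -H i t (ψ k t)) hMg₀ hMh hK (fun k l hkl => by dsimp only; gcongr)
    (by field_simp) (fun t ht => (pi_norm_le_iff_of_nonneg hMg₀).2 (hMg t (by simpa using ht)))
    (funext hφT) (fun k hk t ht => hasDerivAt_pi.2 (hD k hk t ht)) (fun k _ t _ => hF k t)
    (fun k hk => funext (hψφ k hk)) (fun k hk t ht => funext (hmin k hk t ht))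
    t (by simpa using ht)
  calc |φ t i| ≤ ‖φ t‖ := norm_le_pi_norm (φ t) i
    _ ≤ schemeBound Mg Mh (d * MQ) T t := hφt
    _ ≤ schemeBound Mg Mh (d * MQ) T 0 := schemeBound_antitoneOn hMg₀ hMh hK hT ht.2 ht.1
    _ = (Mg + Mh * T) * Real.exp (d * MQ * T) := by simp [schemeBound]

/-- Lemma 1: uniform boundedness of the approximations `φ_N`:
`|φ_N(t,i)| ≤ C₁ = (M_g + M_h·T)·e^{d·M_Q·T}` for all `N`, `t`, `i`. -/
theorem scheme_uniform_bound {d : ℕ} [NeZero d] {T MQ Mh Mg : ℝ} (hT : 0 ≤ T)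
    (H : Fin d → ℝ → (Fin d → ℝ) → ℝ) (g : ℝ → Fin d → ℝ)
    (hH : ∀ i t w, |H i t w| ≤ (d : ℝ) * MQ * (⨆ j, |w j|) + Mh)
    (hMg : ∀ t ∈ Icc 0 T, ∀ i, |g t i| ≤ Mg) :
    ∀ (N : ℕ), 0 < N → ∀ (φ : ℝ → Fin d → ℝ) (ψ : ℕ → ℝ → Fin d → ℝ),
      (∀ i, φ T i = g T i) →
      (∀ k < N, ∀ t ∈ Icc (T * k / N) (T * (k + 1) / N), ∀ i,
        HasDerivAt (fun s => ψ k s i) (-(H i t (ψ k t))) t) →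
      (∀ k < N, ∀ i, ψ k (T * (k + 1) / N) i = φ (T * (k + 1) / N) i) →
      (∀ k < N, ∀ t ∈ Icc (T * k / N) (T * (k + 1) / N), ∀ i,
        φ t i = min (ψ k t i) (g t i)) →
      ∀ t ∈ Icc 0 T, ∀ i,
        |φ t i| ≤ (Mg + Mh * T) * Real.exp ((d : ℝ) * MQ * T) :=
  scheme_uniform_bound_general H g hH hMg
end

section
/- There exists a constant C_4, depending only on M_g, M_h, M_Q, L_g, d, T, such that for every N, every s, r ∈ [0,T] with s < r, and every i ∈ S: φ_N(r,i) - φ_N(s,i) ≥ -∫_s^r H_i(t, φ_N(t)) dt - C_4/N. -/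
/-!
On a grid interval `[a, b]` of length `Δ = T / N` we have `φ ≤ ψ` with equality at `b`, so
`φ b - φ x ≥ ψ b - ψ x = -∫ x..b, H(t, ψ t)`. A backward Grönwall estimate, propagated interval
by interval from `φ T = g T`, bounds `ψ` and `φ` independently of `N`. Hence both are Lipschitz
on each interval with `N`-independent constants, `‖ψ - φ‖ = O(Δ)` there, and by the Lipschitz
continuity of `H` in `w`, replacing `H(t, ψ t)` by `H(t, φ t)` costs `O(Δ²)` per interval.
Summing over at most `N` intervals, plus a crude `O(Δ)` estimate on the partial interval
containing `r`, gives `O(1 / N)`.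
-/

open Set

theorem gronwallBound_gronwallBound (δ K ε x y : ℝ) :
    gronwallBound (gronwallBound δ K ε x) K ε y = gronwallBound δ K ε (x + y) := by
  by_cases hK : K = 0
  · simp only [hK, gronwallBound_K0]
    ring
  · simp only [gronwallBound_of_K_ne_0 hK, mul_add, Real.exp_add]
    ring

theorem le_gronwallBound {δ K ε x : ℝ} (hδ : 0 ≤ δ) (hK : 0 ≤ K) (hε : 0 ≤ ε) (hx : 0 ≤ x) :
    δ ≤ gronwallBound δ K ε x := by
  simpa only [gronwallBound_x0] using gronwallBound_mono hδ hε hK hx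

theorem norm_le_gronwallBound_of_norm_deriv_le_backward {E : Type*} [NormedAddCommGroup E]
    [NormedSpace ℝ E] {f f' : ℝ → E} {δ K ε a b : ℝ} (hf : ∀ x ∈ Icc a b, HasDerivAt f (f' x) x)
    (hb : ‖f b‖ ≤ δ) (bound : ∀ x ∈ Icc a b, ‖f' x‖ ≤ K * ‖f x‖ + ε) :
    ∀ x ∈ Icc a b, ‖f x‖ ≤ gronwallBound δ K ε (b - x) := by
  intro x hx
  have hmem : ∀ u ∈ Icc 0 (b - a), b - u ∈ Icc a b := fun u hu =>
    ⟨by linarith [hu.2], by linarith [hu.1]⟩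
  have hrev : ∀ u ∈ Icc 0 (b - a), HasDerivAt (fun u => f (b - u)) (-f' (b - u)) u :=
    fun u hu => (hf _ (hmem u hu)).comp_const_sub b u
  simpa using norm_le_gronwallBound_of_norm_deriv_right_le
    (fun u hu => (hrev u hu).continuousAt.continuousWithinAt)
    (fun u hu => (hrev u (Ico_subset_Icc_self hu)).hasDerivWithinAt) (by simpa using hb)
    (fun u hu => by simpa only [norm_neg] using bound _ (hmem u (Ico_subset_Icc_self hu)))
    (b - x) ⟨by linarith [hx.2], by linarith [hx.1]⟩

theorem iSup_abs_eq_norm {ι : Type*} [Fintype ι] (w : ι → ℝ) : ⨆ j, |w j| = ‖w‖ :=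
  le_antisymm (Real.iSup_le (fun j => norm_le_pi_norm w j) (norm_nonneg w))
    ((pi_norm_le_iff_of_nonneg (Real.iSup_nonneg fun _ => abs_nonneg _)).2 fun j =>
      le_ciSup (f := fun i => |w i|) (finite_range _).bddAbove j)

theorem mul_iSup_abs_le_max_mul_norm {ι : Type*} [Fintype ι] (a : ℝ) (w : ι → ℝ) :
    a * ⨆ j, |w j| ≤ max a 0 * ‖w‖ := by
  rw [iSup_abs_eq_norm]
  exact mul_le_mul_of_nonneg_right (le_max_left a 0) (norm_nonneg w)

theorem norm_le_max_of_forall_eq_min {ι : Type*} [Fintype ι] {u v w : ι → ℝ}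
    (h : ∀ i, u i = min (v i) (w i)) : ‖u‖ ≤ max ‖v‖ ‖w‖ :=
  (pi_norm_le_iff_of_nonneg ((norm_nonneg v).trans (le_max_left _ _))).2 fun i => by
    rw [h i, Real.norm_eq_abs]
    exact abs_min_le_max_abs_abs.trans (max_le_max (norm_le_pi_norm v i) (norm_le_pi_norm w i))

section Grid

variable {t : ℕ → ℝ} {N : ℕ}

theorem continuousOn_Icc_of_grid {X : Type*} [TopologicalSpace X] {f : ℝ → X} (ht : Monotone t)
    (hf : ∀ k < N, ContinuousOn f (Icc (t k) (t (k + 1)))) : ContinuousOn f (Icc (t 0) (t N)) := by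
  induction N with
  | zero => simp
  | succ n ih =>
    rw [← Icc_union_Icc_eq_Icc (ht n.zero_le) (ht n.le_succ)]
    exact (ih fun k hk => hf k (by omega)).union_of_isClosed (hf n n.lt_succ_self)
      isClosed_Icc isClosed_Icc

variable {F : ℝ → ℝ} {e c : ℝ}

theorem neg_mul_le_sub_of_grid_right (ht : Monotone t) (he : 0 ≤ e)
    (hfine : ∀ k < N, ∀ x ∈ Icc (t k) (t (k + 1)), -e ≤ F (t (k + 1)) - F x) :
    ∀ n ≤ N, ∀ x ∈ Icc (t 0) (t n), -(n * e) ≤ F (t n) - F x := by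
  intro n
  induction n with
  | zero =>
    rintro - x ⟨h₁, h₂⟩
    simp [le_antisymm h₂ h₁]
  | succ n ih =>
    rintro hn x ⟨h₀, hx⟩
    push_cast
    rcases le_or_gt x (t n) with hxn | hnx
    · have h₁ := ih (by omega) x ⟨h₀, hxn⟩
      have h₂ := hfine n (by omega) (t n) ⟨le_rfl, ht n.le_succ⟩
      linarith
    · have := hfine n (by omega) x ⟨hnx.le, hx⟩
      nlinarith [n.cast_nonneg (α := ℝ)]

theorem neg_le_sub_of_grid (ht : Monotone t) (he : 0 ≤ e) (hc : 0 ≤ c)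
    (hfine : ∀ k < N, ∀ x ∈ Icc (t k) (t (k + 1)), -e ≤ F (t (k + 1)) - F x)
    (hcrude : ∀ k < N, ∀ x ∈ Icc (t k) (t (k + 1)), ∀ y ∈ Icc (t k) (t (k + 1)), x ≤ y →
      -c ≤ F y - F x)
    {x y : ℝ} (hx : t 0 ≤ x) (hxy : x ≤ y) (hy : y ≤ t N) : -(N * e + c) ≤ F y - F x := by
  induction N generalizing y with
  | zero =>
    simp [le_antisymm hxy (hy.trans hx), hc]
  | succ n ih =>
    push_cast
    rcases le_or_gt y (t n) with hyn | hny
    · nlinarith [ih (fun k hk => hfine k (by omega)) (fun k hk => hcrude k (by omega)) hxy hyn]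
    rcases le_or_gt (t n) x with hnx | hxn
    · have := hcrude n n.lt_succ_self x ⟨hnx, hxy.trans hy⟩ y ⟨hnx.trans hxy, hy⟩ hxy
      nlinarith [n.cast_nonneg (α := ℝ)]
    · have h₁ := neg_mul_le_sub_of_grid_right ht he hfine n n.le_succ x ⟨hx, hxn.le⟩
      have h₂ := hcrude n n.lt_succ_self (t n) ⟨le_rfl, ht n.le_succ⟩ y ⟨hny.le, hy⟩ hny.le
      linarith

end Grid

theorem continuous_of_abs_sub_le {ι : Type*} {g : ℝ → ι → ℝ} {L : ℝ}
    (hg : ∀ i s r, |g s i - g r i| ≤ L * |s - r|) : Continuous g :=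
  continuous_pi fun i => (LipschitzWith.of_dist_le' fun s r => by
    simpa only [Real.dist_eq] using hg i s r).continuous

theorem neg_mul_le_sub_add_integral {u f : ℝ → ℝ} {x y L C : ℝ} (hxy : x ≤ y)
    (hu : |u y - u x| ≤ L * |y - x|) (hf : ∀ s ∈ Ioc x y, |f s| ≤ C) :
    -((L + C) * (y - x)) ≤ u y - u x + ∫ s in x..y, f s := by
  have hint := intervalIntegral.norm_integral_le_of_norm_le_const (C := C) (f := f)
    (by rwa [uIoc_of_le hxy])
  rw [Real.norm_eq_abs] at hint
  rw [abs_of_nonneg (sub_nonneg.2 hxy)] at hu hint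
  linarith [neg_abs_le (u y - u x), neg_abs_le (∫ s in x..y, f s)]

/-- `ψ = ψ_N^k` and `φ = φ_N` on `[a, b] = [t_N^k, t_N^{k+1}]`. -/
structure IsMinStep {ι : Type*} [Fintype ι] (H : ι → ℝ → (ι → ℝ) → ℝ) (g φ ψ : ℝ → ι → ℝ)
    (a b : ℝ) : Prop where
  hasDerivAt : ∀ t ∈ Icc a b, HasDerivAt ψ (fun i => -H i t (ψ t)) t
  right_eq : ψ b = φ b
  eq_min : ∀ t ∈ Icc a b, ∀ i, φ t i = min (ψ t i) (g t i)

namespace IsMinStep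

variable {ι : Type*} [Fintype ι] {H : ι → ℝ → (ι → ℝ) → ℝ} {g φ ψ : ℝ → ι → ℝ}
  {a b x y K E M L C T : ℝ}

theorem hasDerivAt_apply (hS : IsMinStep H g φ ψ a b) (hx : x ∈ Icc a b) (i : ι) :
    HasDerivAt (fun t => ψ t i) (-H i x (ψ x)) x :=
  hasDerivAt_pi.1 (hS.hasDerivAt x hx) i

theorem continuousOn_psi (hS : IsMinStep H g φ ψ a b) : ContinuousOn ψ (Icc a b) :=
  fun t ht => (hS.hasDerivAt t ht).continuousAt.continuousWithinAt

theorem continuousOn_phi (hS : IsMinStep H g φ ψ a b) (hg : Continuous g) :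
    ContinuousOn φ (Icc a b) :=
  (continuousOn_pi.2 fun i => ContinuousOn.inf
    ((continuous_apply i).comp_continuousOn hS.continuousOn_psi)
    ((continuous_apply i).comp hg).continuousOn).congr fun t ht => funext (hS.eq_min t ht)

theorem norm_le_gronwallBound (hS : IsMinStep H g φ ψ a b) (hK : 0 ≤ K) (hE : 0 ≤ E)
    (hM : 0 ≤ M) (hH : ∀ i t w, |H i t w| ≤ K * ‖w‖ + E) (hg : ∀ t ∈ Icc a b, ‖g t‖ ≤ M)
    (hbT : b ≤ T) (hb : ‖φ b‖ ≤ gronwallBound M K E (T - b)) (hx : x ∈ Icc a b) :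
    ‖ψ x‖ ≤ gronwallBound M K E (T - x) ∧ ‖φ x‖ ≤ gronwallBound M K E (T - x) := by
  have hψ : ‖ψ x‖ ≤ gronwallBound M K E (T - x) := by
    have := norm_le_gronwallBound_of_norm_deriv_le_backward (K := K) (ε := E) hS.hasDerivAt
      (hS.right_eq ▸ hb) (fun t _ => (pi_norm_le_iff_of_nonneg (by positivity)).2 fun i => by
        simpa using hH i t (ψ t)) x hx
    rwa [gronwallBound_gronwallBound, sub_add_sub_cancel] at this
  refine ⟨hψ, (norm_le_max_of_forall_eq_min (hS.eq_min x hx)).trans (max_le hψ ?_)⟩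
  exact (hg x hx).trans (le_gronwallBound hM hK hE (by linarith [hx.2]))

theorem abs_psi_sub_le (hS : IsMinStep H g φ ψ a b) (hC : ∀ t ∈ Icc a b, ∀ i, |H i t (ψ t)| ≤ C)
    (hx : x ∈ Icc a b) (hy : y ∈ Icc a b) (i : ι) : |ψ y i - ψ x i| ≤ C * |y - x| := by
  simpa only [Real.norm_eq_abs] using (convex_Icc a b).norm_image_sub_le_of_norm_hasDerivWithin_le
    (fun t ht => (hS.hasDerivAt_apply ht i).hasDerivWithinAt)
    (fun t ht => by simpa only [norm_neg, Real.norm_eq_abs] using hC t ht i) hx hy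

theorem abs_phi_sub_le (hS : IsMinStep H g φ ψ a b) (hC : ∀ t ∈ Icc a b, ∀ i, |H i t (ψ t)| ≤ C)
    {i : ι} (hgL : ∀ s r, |g s i - g r i| ≤ L * |s - r|) (hx : x ∈ Icc a b) (hy : y ∈ Icc a b) :
    |φ y i - φ x i| ≤ max C L * |y - x| := by
  rw [hS.eq_min y hy, hS.eq_min x hx, max_mul_of_nonneg _ _ (abs_nonneg _)]
  exact (abs_min_sub_min_le_max _ _ _ _).trans
    (max_le_max (hS.abs_psi_sub_le hC hx hy i) (hgL y x))

theorem norm_sub_le (hS : IsMinStep H g φ ψ a b) (hC0 : 0 ≤ C)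
    (hC : ∀ t ∈ Icc a b, ∀ i, |H i t (ψ t)| ≤ C) (hgL : ∀ i s r, |g s i - g r i| ≤ L * |s - r|)
    (hx : x ∈ Icc a b) : ‖φ x - ψ x‖ ≤ (C + max C L) * (b - x) := by
  have hb : b ∈ Icc a b := ⟨hx.1.trans hx.2, le_rfl⟩
  have hbx : |b - x| = b - x := abs_of_nonneg (sub_nonneg.2 hx.2)
  refine (pi_norm_le_iff_of_nonneg (mul_nonneg (by positivity) (by linarith [hx.2]))).2 fun i => ?_
  calc ‖(φ x - ψ x) i‖ = |(ψ b i - ψ x i) - (φ b i - φ x i)| := by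
        rw [hS.right_eq, Real.norm_eq_abs, Pi.sub_apply]; ring_nf
    _ ≤ C * |b - x| + max C L * |b - x| :=
        (abs_sub _ _).trans (add_le_add (hS.abs_psi_sub_le hC hx hb i)
          (hS.abs_phi_sub_le hC (hgL i) hx hb))
    _ = (C + max C L) * (b - x) := by rw [hbx]; ring

theorem neg_sq_le_sub_add_integral (hS : IsMinStep H g φ ψ a b) (hK : 0 ≤ K) (hC0 : 0 ≤ C)
    (hHc : ∀ i, Continuous fun p : ℝ × (ι → ℝ) => H i p.1 p.2)
    (hHlip : ∀ i t w w', |H i t w - H i t w'| ≤ K * ‖w - w'‖)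
    (hC : ∀ t ∈ Icc a b, ∀ i, |H i t (ψ t)| ≤ C) (hgL : ∀ i s r, |g s i - g r i| ≤ L * |s - r|)
    (hx : x ∈ Icc a b) (i : ι) :
    -(K * (C + max C L) * (b - a) ^ 2) ≤ φ b i - φ x i + ∫ t in x..b, H i t (φ t) := by
  have hsub : Icc x b ⊆ Icc a b := Icc_subset_Icc_left hx.1
  have hint : ∀ f : ℝ → ι → ℝ, ContinuousOn f (Icc a b) →
      IntervalIntegrable (fun t => H i t (f t)) MeasureTheory.volume x b := fun f hf =>
    (((hHc i).comp_continuousOn (continuousOn_id.prodMk hf)).mono hsub).intervalIntegrable_of_Icc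
      hx.2
  have hIψ := hint ψ hS.continuousOn_psi
  have hIφ := hint φ (hS.continuousOn_phi (continuous_of_abs_sub_le hgL))
  have hFTC : ψ b i - ψ x i = -∫ t in x..b, H i t (ψ t) := by
    rw [← intervalIntegral.integral_neg, intervalIntegral.integral_eq_sub_of_hasDerivAt
      (fun t ht => hS.hasDerivAt_apply (hsub (uIcc_of_le hx.2 ▸ ht)) i) hIψ.neg]
  have hgap : ∀ t ∈ uIoc x b, ‖H i t (φ t) - H i t (ψ t)‖ ≤ K * ((C + max C L) * (b - a)) := by
    intro t ht
    rw [uIoc_of_le hx.2] at ht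
    have ht' : t ∈ Icc a b := hsub (Ioc_subset_Icc_self ht)
    refine (hHlip i t _ _).trans (mul_le_mul_of_nonneg_left ?_ hK)
    exact (hS.norm_sub_le hC0 hC hgL ht').trans (by gcongr; exact ht'.1)
  have hdiff := intervalIntegral.norm_integral_le_of_norm_le_const hgap
  rw [intervalIntegral.integral_sub hIφ hIψ, Real.norm_eq_abs,
    abs_of_nonneg (sub_nonneg.2 hx.2)] at hdiff
  have hφψ : φ x i ≤ ψ x i := hS.eq_min x hx i ▸ min_le_left _ _
  have hbx : K * ((C + max C L) * (b - a)) * (b - x) ≤ K * (C + max C L) * (b - a) ^ 2 := by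
    have : 0 ≤ K * (C + max C L) * (b - a) :=
      mul_nonneg (mul_nonneg hK (by positivity)) (by linarith [hx.1, hx.2])
    nlinarith [hx.1]
  rw [← hS.right_eq]
  linarith [neg_abs_le ((∫ t in x..b, H i t (φ t)) - ∫ t in x..b, H i t (ψ t))]

end IsMinStep

section SchemeOnGrid

variable {ι : Type*} [Fintype ι] {H : ι → ℝ → (ι → ℝ) → ℝ} {g φ : ℝ → ι → ℝ}
  {ψ : ℕ → ℝ → ι → ℝ} {t : ℕ → ℝ} {N : ℕ} {K E M L C Δ : ℝ}

theorem norm_le_gronwallBound_of_grid (hS : ∀ k < N, IsMinStep H g φ (ψ k) (t k) (t (k + 1)))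
    (hφ : φ (t N) = g (t N)) (ht : Monotone t) (hK : 0 ≤ K) (hE : 0 ≤ E) (hM : 0 ≤ M)
    (hH : ∀ i s w, |H i s w| ≤ K * ‖w‖ + E) (hg : ∀ s ∈ Icc (t 0) (t N), ‖g s‖ ≤ M) :
    ∀ k < N, ∀ x ∈ Icc (t k) (t (k + 1)),
      ‖ψ k x‖ ≤ gronwallBound M K E (t N - x) ∧ ‖φ x‖ ≤ gronwallBound M K E (t N - x) := by
  have hstep : ∀ k < N, ∀ x ∈ Icc (t k) (t (k + 1)),
      ‖φ (t (k + 1))‖ ≤ gronwallBound M K E (t N - t (k + 1)) →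
      ‖ψ k x‖ ≤ gronwallBound M K E (t N - x) ∧ ‖φ x‖ ≤ gronwallBound M K E (t N - x) :=
    fun k hk x hx hb => (hS k hk).norm_le_gronwallBound hK hE hM hH
      (fun s hs => hg s (Icc_subset_Icc (ht k.zero_le) (ht hk) hs)) (ht hk) hb hx
  have hgrid : ∀ k ≤ N, ‖φ (t k)‖ ≤ gronwallBound M K E (t N - t k) := by
    intro k hk
    refine Nat.decreasingInduction (fun k hk ih => (hstep k hk (t k) ⟨le_rfl, ht k.le_succ⟩ ih).2)
      ?_ hk
    rw [sub_self, gronwallBound_x0, hφ]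
    exact hg _ ⟨ht N.zero_le, le_rfl⟩
  exact fun k hk x hx => hstep k hk x hx (hgrid (k + 1) hk)

theorem neg_le_sub_add_integral_of_grid (hS : ∀ k < N, IsMinStep H g φ (ψ k) (t k) (t (k + 1)))
    (ht : Monotone t) (hΔ : ∀ k < N, t (k + 1) - t k ≤ Δ) (hΔ0 : 0 ≤ Δ) (hK : 0 ≤ K)
    (hC0 : 0 ≤ C) (hHc : ∀ i, Continuous fun p : ℝ × (ι → ℝ) => H i p.1 p.2)
    (hHlip : ∀ i s w w', |H i s w - H i s w'| ≤ K * ‖w - w'‖)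
    (hgL : ∀ i s r, |g s i - g r i| ≤ L * |s - r|)
    (hC : ∀ k < N, ∀ s ∈ Icc (t k) (t (k + 1)), ∀ i, |H i s (ψ k s)| ≤ C ∧ |H i s (φ s)| ≤ C)
    {x y : ℝ} (hx : t 0 ≤ x) (hxy : x ≤ y) (hy : y ≤ t N) (i : ι) :
    -(N * (K * (C + max C L) * Δ ^ 2) + (C + max C L) * Δ) ≤
      φ y i - φ x i + ∫ s in x..y, H i s (φ s) := by
  have hcont : ContinuousOn (fun s => H i s (φ s)) (Icc (t 0) (t N)) :=
    (hHc i).comp_continuousOn (continuousOn_id.prodMk (continuousOn_Icc_of_grid ht fun k hk =>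
      (hS k hk).continuousOn_phi (continuous_of_abs_sub_le hgL)))
  set F : ℝ → ℝ := fun s => φ s i + ∫ u in t 0..s, H i u (φ u)
  have hF : ∀ u ∈ Icc (t 0) (t N), ∀ v ∈ Icc (t 0) (t N),
      φ v i - φ u i + ∫ s in u..v, H i s (φ s) = F v - F u := by
    intro u hu v hv
    have hI : ∀ w ∈ Icc (t 0) (t N),
        IntervalIntegrable (fun s => H i s (φ s)) MeasureTheory.volume (t 0) w :=
      fun w hw => (hcont.mono (uIcc_subset_Icc (left_mem_Icc.2 (hx.trans (hxy.trans hy))) hw)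
        ).intervalIntegrable
    rw [← intervalIntegral.integral_interval_sub_left (hI v hv) (hI u hu)]
    ring
  have hsub : ∀ k < N, Icc (t k) (t (k + 1)) ⊆ Icc (t 0) (t N) :=
    fun k hk => Icc_subset_Icc (ht k.zero_le) (ht hk)
  have hmesh : ∀ k < N, 0 ≤ t (k + 1) - t k := fun k _ => sub_nonneg.2 (ht k.le_succ)
  rw [hF x ⟨hx, hxy.trans hy⟩ y ⟨hx.trans hxy, hy⟩]
  refine neg_le_sub_of_grid ht (by positivity) (by positivity) (fun k hk u hu => ?_)
    (fun k hk u hu v hv huv => ?_) hx hxy hy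
  · rw [← hF u (hsub k hk hu) _ (hsub k hk ⟨ht k.le_succ, le_rfl⟩)]
    refine le_trans ?_ ((hS k hk).neg_sq_le_sub_add_integral hK hC0 hHc hHlip
      (fun s hs j => (hC k hk s hs j).1) hgL hu i)
    have := mul_le_mul_of_nonneg_left (pow_le_pow_left₀ (hmesh k hk) (hΔ k hk) 2)
      (mul_nonneg hK (by positivity : 0 ≤ C + max C L))
    linarith
  · rw [← hF u (hsub k hk hu) v (hsub k hk hv)]
    refine le_trans ?_ (neg_mul_le_sub_add_integral (u := fun s => φ s i) huv
      ((hS k hk).abs_phi_sub_le (fun s hs j => (hC k hk s hs j).1) (hgL i) hu hv)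
      fun s hs => (hC k hk s ⟨hu.1.trans hs.1.le, hs.2.trans hv.2⟩ i).2)
    have : v - u ≤ Δ := by linarith [hu.1, hv.2, hΔ k hk]
    have : 0 ≤ C + max C L := by positivity
    nlinarith

end SchemeOnGrid

theorem neg_le_sub_add_integral_of_uniform_grid {ι : Type*} [Fintype ι]
    {H : ι → ℝ → (ι → ℝ) → ℝ} {g φ : ℝ → ι → ℝ} {ψ : ℕ → ℝ → ι → ℝ} {N : ℕ} {T K E M L C : ℝ}
    (hN : 0 < N) (hT : 0 ≤ T) (hK : 0 ≤ K) (hE : 0 ≤ E) (hM : 0 ≤ M)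
    (hC : K * gronwallBound M K E T + E ≤ C)
    (hHc : ∀ i, Continuous fun p : ℝ × (ι → ℝ) => H i p.1 p.2)
    (hH : ∀ i s w, |H i s w| ≤ K * ‖w‖ + E)
    (hHlip : ∀ i s w w', |H i s w - H i s w'| ≤ K * ‖w - w'‖)
    (hg : ∀ s ∈ Icc 0 T, ‖g s‖ ≤ M) (hgL : ∀ i s r, |g s i - g r i| ≤ L * |s - r|)
    (hφ : φ T = g T) (hS : ∀ k < N, IsMinStep H g φ (ψ k) (T * k / N) (T * (k + 1) / N))
    {x y : ℝ} (hx : 0 ≤ x) (hxy : x ≤ y) (hy : y ≤ T) (i : ι) :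
    -((C + max C L) * (K * T + 1) * T / N) ≤ φ y i - φ x i + ∫ s in x..y, H i s (φ s) := by
  set τ : ℕ → ℝ := fun k => T * k / N
  have hτ : Monotone τ := fun m n hmn => by simp only [τ]; gcongr
  have hτ0 : τ 0 = 0 := by simp [τ]
  have hτN : τ N = T := by simp [τ, hN.ne']
  have hS' : ∀ k < N, IsMinStep H g φ (ψ k) (τ k) (τ (k + 1)) := fun k hk => by
    simpa only [τ, Nat.cast_succ] using hS k hk
  have hbound := norm_le_gronwallBound_of_grid hS' (hτN ▸ hφ) hτ hK hE hM hH (hτ0 ▸ hτN ▸ hg)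
  have hHC : ∀ k < N, ∀ s ∈ Icc (τ k) (τ (k + 1)), ∀ j,
      |H j s (ψ k s)| ≤ C ∧ |H j s (φ s)| ≤ C := by
    intro k hk s hs j
    have := gronwallBound_mono hM hE hK (show T - s ≤ T by linarith [hτ0 ▸ hτ k.zero_le, hs.1])
    obtain ⟨hψs, hφs⟩ := hbound k hk s hs
    rw [hτN] at hψs hφs
    constructor <;> nlinarith [hH j s (ψ k s), hH j s (φ s)]
  have hC0 : 0 ≤ C :=
    (add_nonneg (mul_nonneg hK (hM.trans (le_gronwallBound hM hK hE hT))) hE).trans hC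
  have hmain := neg_le_sub_add_integral_of_grid hS' hτ (Δ := T / N)
    (fun k _ => le_of_eq (by simp only [τ]; push_cast; ring)) (by positivity) hK hC0 hHc hHlip
    hgL hHC (hτ0 ▸ hx) hxy (hτN ▸ hy) i
  have hC4 : N * (K * (C + max C L) * (T / N) ^ 2) + (C + max C L) * (T / N) =
      (C + max C L) * (K * T + 1) * T / N := by
    field_simp
  linarith

theorem scheme_v_stability_general {d : ℕ} {T MQ Mh Mg Lg : ℝ}
    (H : Fin d → ℝ → (Fin d → ℝ) → ℝ) (g : ℝ → Fin d → ℝ)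
    (hHc : ∀ i, Continuous fun p : ℝ × (Fin d → ℝ) => H i p.1 p.2)
    (hH : ∀ i t w, |H i t w| ≤ (d : ℝ) * MQ * (⨆ j, |w j|) + Mh)
    (hHlip : ∀ i t (w w' : Fin d → ℝ),
      |H i t w - H i t w'| ≤ (d : ℝ) * MQ * (⨆ j, |w j - w' j|))
    (hMg : ∀ t ∈ Icc 0 T, ∀ i, |g t i| ≤ Mg)
    (hLg : ∀ i, ∀ s r : ℝ, |g s i - g r i| ≤ Lg * |s - r|) :
    ∃ C4 : ℝ, ∀ (N : ℕ), 0 < N → ∀ (φ : ℝ → Fin d → ℝ) (ψ : ℕ → ℝ → Fin d → ℝ),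
      (∀ i, φ T i = g T i) →
      (∀ k < N, ∀ t ∈ Icc (T * k / N) (T * (k + 1) / N), ∀ i,
        HasDerivAt (fun s => ψ k s i) (-(H i t (ψ k t))) t) →
      (∀ k < N, ∀ i, ψ k (T * (k + 1) / N) i = φ (T * (k + 1) / N) i) →
      (∀ k < N, ∀ t ∈ Icc (T * k / N) (T * (k + 1) / N), ∀ i,
        φ t i = min (ψ k t i) (g t i)) →
      ∀ s ∈ Icc 0 T, ∀ r ∈ Icc 0 T, s < r → ∀ i,
        φ r i - φ s i ≥ -(∫ t in s..r, H i t (φ t)) - C4 / N := by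
  set K := max ((d : ℝ) * MQ) 0
  set E := max Mh 0
  set C := K * gronwallBound Mg K E T + E
  refine ⟨(C + max C Lg) * (K * T + 1) * T, fun N hN φ ψ hφT hψ hmatch hmin s hs r hr hsr i => ?_⟩
  have hM : 0 ≤ Mg := (abs_nonneg _).trans (hMg s hs i)
  have := neg_le_sub_add_integral_of_uniform_grid hN (hs.1.trans hs.2) (le_max_right _ _)
    (le_max_right _ _) hM le_rfl hHc
    (fun i t w => (hH i t w).trans
      (add_le_add (mul_iSup_abs_le_max_mul_norm _ w) (le_max_left _ _)))
    (fun i t w w' => (hHlip i t w w').trans (mul_iSup_abs_le_max_mul_norm _ (w - w')))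
    (fun t ht => (pi_norm_le_iff_of_nonneg hM).2 (hMg t ht)) hLg (funext hφT)
    (fun k hk => ⟨fun t ht => hasDerivAt_pi.2 (hψ k hk t ht), funext (hmatch k hk), hmin k hk⟩)
    hs.1 hsr.le hr.2 i
  linarith

/-- Lemma 5, approximate v-stability: there is a constant `C₄`
depending only on the data such that
`φ_N(r,i) - φ_N(s,i) ≥ -∫_s^r H_i(t,φ_N(t)) dt - C₄/N` for all `N`, `s < r`, `i`. -/
theorem scheme_v_stability {d : ℕ} [NeZero d] {T MQ Mh Mg Lg : ℝ} (hT : 0 ≤ T)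
    (H : Fin d → ℝ → (Fin d → ℝ) → ℝ) (g : ℝ → Fin d → ℝ)
    (hHc : ∀ i, Continuous fun p : ℝ × (Fin d → ℝ) => H i p.1 p.2)
    (hH : ∀ i t w, |H i t w| ≤ (d : ℝ) * MQ * (⨆ j, |w j|) + Mh)
    (hHlip : ∀ i t (w w' : Fin d → ℝ),
      |H i t w - H i t w'| ≤ (d : ℝ) * MQ * (⨆ j, |w j - w' j|))
    (hMg : ∀ t ∈ Icc 0 T, ∀ i, |g t i| ≤ Mg)
    (hLg : ∀ i, ∀ s r : ℝ, |g s i - g r i| ≤ Lg * |s - r|) :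
    ∃ C4 : ℝ, ∀ (N : ℕ), 0 < N → ∀ (φ : ℝ → Fin d → ℝ) (ψ : ℕ → ℝ → Fin d → ℝ),
      (∀ i, φ T i = g T i) →
      (∀ k < N, ∀ t ∈ Icc (T * k / N) (T * (k + 1) / N), ∀ i,
        HasDerivAt (fun s => ψ k s i) (-(H i t (ψ k t))) t) →
      (∀ k < N, ∀ i, ψ k (T * (k + 1) / N) i = φ (T * (k + 1) / N) i) →
      (∀ k < N, ∀ t ∈ Icc (T * k / N) (T * (k + 1) / N), ∀ i,
        φ t i = min (ψ k t i) (g t i)) →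
      ∀ s ∈ Icc 0 T, ∀ r ∈ Icc 0 T, s < r → ∀ i,
        φ r i - φ s i ≥ -(∫ t in s..r, H i t (φ t)) - C4 / N :=
  scheme_v_stability_general H g hHc hH hHlip hMg hLg
end

section
/- Let φ_n → φ uniformly on [0,T]×S, with each φ_n Lipschitz in t with a common constant, and suppose for each n the following holds: whenever φ_n(t',i) < g(t',i) on an interval, then φ_n(ŝ,i) - φ_n(t,i) ≤ -∫_t^{ŝ} H_i(t',φ_n(t'))dt' for t, ŝ in that interval. If t ∈ (0,T) is a point of differentiability of φ(·,i) with φ(t,i) < g(t,i), then dφ(t,i)/dt ≤ -H_i(t, φ(t)). -/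
/-!
Near `t`, `φ(·,i)` stays a fixed margin below `g(·,i)`, so by uniform convergence the `φ_n(·,i)`
stay below `g(·,i)` on a common interval `[t, b]` for large `n`, and the integrated inequality
holds there for all these `φ_n`. Since `H_i(x, φ_n(x)) → H_i(x, φ(x))` uniformly on compacts,
it passes to the limit: `φ(s,i) - φ(t,i) + ∫_t^s H_i(x, φ(x)) dx ≤ 0` for `s ∈ (t, b]`. This
function vanishes at `s = t` and has derivative `D + H_i(t, φ(t))` there, which is thus `≤ 0`.
-/

open Set Filter MeasureTheory Topology

theorem continuousOn_pi_of_abs_sub_le {ι : Type*} {f : ℝ → ι → ℝ} {s : Set ℝ} {C : ℝ}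
    (hf : ∀ x ∈ s, ∀ y ∈ s, ∀ i, |f x i - f y i| ≤ C * |x - y|) : ContinuousOn f s :=
  continuousOn_pi.2 fun i =>
    (LipschitzOnWith.of_dist_le' fun x hx y hy => hf x hx y hy i).continuousOn

theorem TendstoUniformlyOn.exists_Icc_eventually_lt {ι : Type*} {l : Filter ι}
    {F : ι → ℝ → ℝ} {f g : ℝ → ℝ} {K : Set ℝ} {t : ℝ} (hF : TendstoUniformlyOn F f l K)
    (hK : K ∈ 𝓝 t) (hf : ContinuousAt f t) (hg : ContinuousAt g t) (hlt : f t < g t) :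
    ∃ b > t, Icc t b ⊆ K ∧ ∀ᶠ n in l, ∀ y ∈ Icc t b, F n y < g y := by
  set ε := (g t - f t) / 2
  have hε : 0 < ε := by simp only [ε]; linarith
  have hmargin : ∀ᶠ y in 𝓝 t, y ∈ K ∧ ε < g y - f y :=
    (eventually_of_mem hK fun _ hy => hy).and
      ((hg.sub hf).eventually (lt_mem_nhds (by simp only [ε, Pi.sub_apply]; linarith)))
  obtain ⟨b, hb, hsub⟩ := mem_nhdsGE_iff_exists_Icc_subset.1 (nhdsWithin_le_nhds hmargin)
  refine ⟨b, hb, fun y hy => (hsub hy).1, ?_⟩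
  filter_upwards [Metric.tendstoUniformlyOn_iff.1 hF ε hε] with n hn y hy
  have hclose := (abs_lt.1 (Real.dist_eq _ _ ▸ hn y (hsub hy).1)).1
  linarith [(hsub hy).2]

/-- `H` is uniformly continuous on the compact set `K ×ˢ cthickening 1 (f '' K)`, which
eventually contains the graphs of the `F n` over `K`. -/
theorem TendstoUniformlyOn.comp_of_isCompact {ι α β γ : Type*} [PseudoMetricSpace α]
    [PseudoMetricSpace β] [ProperSpace β] [PseudoMetricSpace γ] {l : Filter ι}
    {F : ι → α → β} {f : α → β} {K : Set α} {H : α → β → γ}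
    (hH : Continuous (Function.uncurry H)) (hK : IsCompact K) (hf : ContinuousOn f K)
    (h : TendstoUniformlyOn F f l K) :
    TendstoUniformlyOn (fun n x => H x (F n x)) (fun x => H x (f x)) l K := by
  have hL : IsCompact (K ×ˢ Metric.cthickening 1 (f '' K)) :=
    hK.prod (hK.image_of_continuousOn hf).cthickening
  have hHu :=
    Metric.uniformContinuousOn_iff.1 (hL.uniformContinuousOn_of_continuous hH.continuousOn)
  rw [Metric.tendstoUniformlyOn_iff] at h ⊢
  intro ε hε
  obtain ⟨δ, hδ, hHδ⟩ := hHu ε hε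
  filter_upwards [h (min δ 1) (by positivity)] with n hn x hx
  have hfx : f x ∈ f '' K := mem_image_of_mem f hx
  have hdist := hn x hx
  refine hHδ (x, f x) ⟨hx, Metric.self_subset_cthickening _ hfx⟩ (x, F n x)
    ⟨hx, Metric.mem_cthickening_of_dist_le _ _ _ _ hfx ?_⟩ ?_
  · rw [dist_comm]; exact hdist.le.trans (min_le_right _ _)
  · simpa [Prod.dist_eq] using hdist.trans_le (min_le_left _ _)

theorem HasDerivAt.nonpos_of_eventually_le_right {f : ℝ → ℝ} {f' t : ℝ} (hf : HasDerivAt f f' t)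
    (hle : ∀ᶠ s in 𝓝[>] t, f s ≤ f t) : f' ≤ 0 := by
  refine le_of_tendsto ((hasDerivAt_iff_tendsto_slope.1 hf).mono_left (nhdsGT_le_nhdsNE t)) ?_
  filter_upwards [hle, self_mem_nhdsWithin] with s hs hts
  rw [slope_def_field]
  exact div_nonpos_of_nonpos_of_nonneg (by linarith) (by linarith [mem_Ioi.1 hts])

theorem HasDerivAt.le_neg_of_sub_le_neg_integral {ψ h : ℝ → ℝ} {U : Set ℝ} {D t : ℝ}
    (hψ : HasDerivAt ψ D t) (hU : U ∈ 𝓝 t) (hh : ContinuousOn h U)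
    (hle : ∀ᶠ s in 𝓝[>] t, ψ s - ψ t ≤ -∫ x in t..s, h x) : D ≤ -h t := by
  have hmeas : StronglyMeasurableAtFilter h (𝓝 t) :=
    ⟨interior U, interior_mem_nhds.2 hU,
      (hh.mono interior_subset).aestronglyMeasurable isOpen_interior.measurableSet⟩
  have hint : HasDerivAt (fun s => ∫ x in t..s, h x) (h t) t :=
    intervalIntegral.integral_hasDerivAt_right (by simp) hmeas (hh.continuousAt hU)
  have hnonpos := (hψ.add hint).nonpos_of_eventually_le_right <| hle.mono fun s hs => by
    simp only [Pi.add_apply, intervalIntegral.integral_same, add_zero]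
    linarith
  linarith

theorem limit_u_stability_general {d : ℕ} {T C3 : ℝ}
    (H : Fin d → ℝ → (Fin d → ℝ) → ℝ) (g : ℝ → Fin d → ℝ)
    (hHc : ∀ i, Continuous fun p : ℝ × (Fin d → ℝ) => H i p.1 p.2)
    (hgc : ∀ i, Continuous fun t => g t i)
    (φn : ℕ → ℝ → Fin d → ℝ) (φ : ℝ → Fin d → ℝ)
    (hlip : ∀ n, ∀ s ∈ Icc 0 T, ∀ r ∈ Icc 0 T, ∀ i,
      |φn n s i - φn n r i| ≤ C3 * |s - r|)
    (hconv : TendstoUniformlyOn (fun n t => φn n t) (fun t => φ t) atTop (Icc 0 T))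
    -- on any interval where φ_n(·,i) < g(·,i), the integrated differential
    -- inequality holds
    (hineq : ∀ n : ℕ, ∀ i, ∀ a b : ℝ, a ≤ b → Icc a b ⊆ Icc 0 T →
      (∀ t' ∈ Icc a b, φn n t' i < g t' i) →
      ∀ t ∈ Icc a b, ∀ s ∈ Icc a b, t ≤ s →
        φn n s i - φn n t i ≤ -(∫ t' in t..s, H i t' (φn n t'))) :
    ∀ t ∈ Ioo 0 T, ∀ i, φ t i < g t i → ∀ D : ℝ,
      HasDerivAt (fun s => φ s i) D t → D ≤ -(H i t (φ t)) := by
  intro t ht i hlt D hD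
  have hK : Icc 0 T ∈ 𝓝 t := Icc_mem_nhds ht.1 ht.2
  have hφn (n : ℕ) : ContinuousOn (φn n) (Icc 0 T) := continuousOn_pi_of_abs_sub_le (hlip n)
  have hφ : ContinuousOn φ (Icc 0 T) := hconv.continuousOn (Frequently.of_forall hφn)
  have hconv_i := (Pi.uniformContinuous_proj _ i).comp_tendstoUniformlyOn hconv
  obtain ⟨b, hb, hbK, hbelow⟩ :=
    hconv_i.exists_Icc_eventually_lt hK hD.continuousAt (hgc i).continuousAt hlt
  refine hD.le_neg_of_sub_le_neg_integral hK
    ((hHc i).comp_continuousOn (continuousOn_id.prodMk hφ)) ?_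
  filter_upwards [Ioc_mem_nhdsGT hb] with s hs
  have hts : uIcc t s ⊆ Icc 0 T := by
    rw [uIcc_of_le hs.1.le]; exact (Icc_subset_Icc_right hs.2).trans hbK
  have hlhs : Tendsto (fun n => φn n s i - φn n t i) atTop (𝓝 (φ s i - φ t i)) :=
    (hconv_i.tendsto_at (hts right_mem_uIcc)).sub (hconv_i.tendsto_at (hts left_mem_uIcc))
  have hrhs := ((hconv.mono hts).comp_of_isCompact (hHc i) isCompact_uIcc (hφ.mono hts)
    ).tendsto_intervalIntegral_of_continuousOn (μ := volume) (Eventually.of_forall fun n =>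
      (hHc i).comp_continuousOn (continuousOn_id.prodMk ((hφn n).mono hts)))
  exact le_of_tendsto_of_tendsto hlhs hrhs.neg (hbelow.mono fun n hn =>
    hineq n i t b hb.le hbK hn t (left_mem_Icc.2 hb.le) s ⟨hs.1.le, hs.2⟩ hs.1.le)

/-- limit passage establishing condition (Z3): at a point of
differentiability of the uniform limit `φ` with `φ(t,i) < g(t,i)`, one has
`dφ(t,i)/dt ≤ -H_i(t,φ(t))`. -/
theorem limit_u_stability {d : ℕ} [NeZero d] {T C3 : ℝ} (hT : 0 ≤ T)
    (H : Fin d → ℝ → (Fin d → ℝ) → ℝ) (g : ℝ → Fin d → ℝ)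
    (hHc : ∀ i, Continuous fun p : ℝ × (Fin d → ℝ) => H i p.1 p.2)
    (hgc : ∀ i, Continuous fun t => g t i)
    (φn : ℕ → ℝ → Fin d → ℝ) (φ : ℝ → Fin d → ℝ)
    (hlip : ∀ n, ∀ s ∈ Icc 0 T, ∀ r ∈ Icc 0 T, ∀ i,
      |φn n s i - φn n r i| ≤ C3 * |s - r|)
    (hconv : TendstoUniformlyOn (fun n t => φn n t) (fun t => φ t) atTop (Icc 0 T))
    -- on any interval where φ_n(·,i) < g(·,i), the integrated differential
    -- inequality holds
    (hineq : ∀ n : ℕ, ∀ i, ∀ a b : ℝ, a ≤ b → Icc a b ⊆ Icc 0 T →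
      (∀ t' ∈ Icc a b, φn n t' i < g t' i) →
      ∀ t ∈ Icc a b, ∀ s ∈ Icc a b, t ≤ s →
        φn n s i - φn n t i ≤ -(∫ t' in t..s, H i t' (φn n t'))) :
    ∀ t ∈ Ioo 0 T, ∀ i, φ t i < g t i → ∀ D : ℝ,
      HasDerivAt (fun s => φ s i) D t → D ≤ -(H i t (φ t)) :=
  limit_u_stability_general H g hHc hgc φn φ hlip hconv hineq
end
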